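/- Existence, substochastic case (Theorem 3.2, first part). Under the stated assumptions, there exists u ∈ L^∞(X×(0,∞)) with u ≥ 0 such that u(x,t) = g(x,t) + ∫₀ᵗ ∫_X K(x,y;t−s) h(y,s) G(u(y,s)) dμ(y) ds for a.e. x ∈ X and a.e. t > 0. Moreover u is the almost-everywhere pointwise limit of the nonincreasing sequence {u_m} of non-negative measurable functions given by u₀(x,t) := η − β + g(x,t) and u_{m+1}(x,t) := g(x,t) + ∫₀ᵗ ∫_X K(x,y;t−s) h(y,s) G(u_m(y,s)) dμ(y) ds, where β := ‖g‖_{L^∞(X×(0,∞))}. -/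

import Mathlib

open MeasureTheory Set Filter Function Real Topology

/-!
The iteration `u_{m+1} = g + T u_m`, with `T v = ∫₀ᵗ ∫ K(·,y;t-s) h(y,s) G(v(y,s)) dμ(y) ds`, is
monotone in `v` because `K, h ≥ 0` and `G` is increasing. The relation `γ G(η) = (η - β) λ₋` makes
the constant `η` an upper barrier: if `v ≤ η`, the mass bound `∫ K ≤ e^{-tλ₋}` gives
`T v ≤ γ G(η) ∫₀ᵗ e^{-(t-s)λ₋} ds ≤ γ G(η) / λ₋ = η - β`, hence `u₁ ≤ η - β + g = u₀`, and by
monotonicity the whole sequence decreases while staying between `0` and `η`. Its pointwise limit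
solves the equation by dominated convergence, first in `y` and then in `s`, dominated by the same
bound.
-/

local notation "ν₊" => (volume.restrict (Ioi (0:ℝ)) : Measure ℝ)

lemma ae_le_toReal_eLpNorm_top {α : Type*} [MeasurableSpace α] {ρ : Measure α} {f : α → ℝ}
    (hf : MemLp f ⊤ ρ) : ∀ᵐ a ∂ρ, f a ≤ (eLpNorm f ⊤ ρ).toReal := by
  rw [toReal_eLpNorm hf.aestronglyMeasurable]
  filter_upwards [ae_le_lpNorm_exponent_top hf] with a ha
  exact (le_abs_self _).trans ha

lemma ContinuousOn.measurable_comp_of_nonneg {α : Type*} [MeasurableSpace α] {G : ℝ → ℝ}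
    {f : α → ℝ} (hG : ContinuousOn G (Ici 0)) (hf : Measurable f) (hf0 : 0 ≤ f) :
    Measurable (G ∘ f) := by
  have hG' : Continuous fun r => G (max r 0) :=
    hG.comp_continuous (continuous_id.max continuous_const) fun r => le_max_right r 0
  have hGf : G ∘ f = (fun r => G (max r 0)) ∘ f :=
    funext fun a => by rw [comp_apply, comp_apply, max_eq_left (show (0:ℝ) ≤ f a from hf0 a)]
  exact hGf ▸ hG'.measurable.comp hf

lemma setIntegral_Ioc_exp_neg_sub_mul_le {l : ℝ} (hl : 0 < l) (t : ℝ) :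
    ∫ s in Ioc 0 t, exp (-((t - s) * l)) ≤ 1 / l := by
  calc ∫ s in Ioc 0 t, exp (-((t - s) * l)) = exp (-(l * t)) * ∫ s in Ioc 0 t, exp (l * s) := by
        rw [← integral_const_mul]; congr 1 with s; rw [← exp_add]; ring_nf
    _ ≤ exp (-(l * t)) * ∫ s in Iic t, exp (l * s) := by
        refine mul_le_mul_of_nonneg_left ?_ (exp_pos _).le
        exact setIntegral_mono_set (integrableOn_exp_mul_Iic hl t)
          (ae_of_all _ fun s => (exp_pos _).le) Ioc_subset_Iic_self.eventuallyLE
    _ = 1 / l := by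
        rw [integral_exp_mul_Iic hl, mul_div_assoc', ← exp_add, neg_add_cancel, exp_zero]

lemma ae_restrict_Ioc_sub_of_ae {P : ℝ → Prop} (hP : ∀ᵐ τ ∂ν₊, P τ) (t : ℝ) :
    ∀ᵐ s ∂volume.restrict (Ioc 0 t), P (t - s) := by
  rw [ae_restrict_iff' measurableSet_Ioi] at hP
  have hsub : ∀ᵐ s, 0 < t - s → P (t - s) :=
    (Measure.measurePreserving_sub_left volume t).quasiMeasurePreserving.ae hP
  rw [← Measure.restrict_congr_set Ioo_ae_eq_Ioc]
  filter_upwards [ae_restrict_of_ae hsub, ae_restrict_mem measurableSet_Ioo] with s hs hmem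
  exact hs (sub_pos.2 hmem.2)

lemma ae_restrict_Ioc_ae_of_ae_prod {X : Type*} [MeasurableSpace X] {μ : Measure X} [SFinite μ]
    {P : X × ℝ → Prop} (hP : ∀ᵐ q ∂μ.prod ν₊, P q) (t : ℝ) :
    ∀ᵐ s ∂volume.restrict (Ioc 0 t), ∀ᵐ y ∂μ, P (y, s) := by
  have hswap : ∀ᵐ r ∂ν₊.prod μ, P r.swap :=
    Measure.measurePreserving_swap.quasiMeasurePreserving.ae hP
  exact ae_restrict_of_ae_restrict_of_subset Ioc_subset_Ioi_self (Measure.ae_ae_of_ae_prod hswap)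

lemma ae_prod_of_ae_forall {α β : Type*} [MeasurableSpace α] [MeasurableSpace β] {μ : Measure α}
    {ν : Measure β} {P : α → β → Prop} (hP : ∀ᵐ x ∂μ, ∀ y, P x y) :
    ∀ᵐ q ∂μ.prod ν, P q.1 q.2 :=
  (Measure.quasiMeasurePreserving_fst.ae hP).mono fun q hq => hq q.2

section Duhamel

variable {X : Type*} [MeasurableSpace X] {μ : Measure X} {K : X → X → ℝ → ℝ}

noncomputable def duhamel (μ : Measure X) (K : X → X → ℝ → ℝ) (φ : X → ℝ → ℝ) (x : X) (t : ℝ) : ℝ :=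
  ∫ s in Ioc 0 t, ∫ y, K x y (t - s) * φ y s ∂μ

variable {l C : ℝ} {φ ψ : X → ℝ → ℝ}

lemma duhamel_nonneg (hK0 : ∀ x y t, 0 ≤ K x y t) (hφ0 : 0 ≤ φ) {x : X} {t : ℝ} :
    0 ≤ duhamel μ K φ x t :=
  integral_nonneg fun _ => integral_nonneg fun _ => mul_nonneg (hK0 _ _ _) (hφ0 _ _)

variable [SFinite μ]

lemma measurable_kernel_integral (hK : Measurable fun q : X × X × ℝ => K q.1 q.2.1 q.2.2)
    {φ : X → ℝ → ℝ} (hφ : Measurable (uncurry φ)) :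
    Measurable fun p : (X × ℝ) × ℝ => ∫ y, K p.1.1 y (p.1.2 - p.2) * φ y p.2 ∂μ := by
  have hKr : Measurable fun r : ((X × ℝ) × ℝ) × X => (r.1.1.1, r.2, r.1.1.2 - r.1.2) := by
    fun_prop
  have hφr : Measurable fun r : ((X × ℝ) × ℝ) × X => (r.2, r.1.2) := by fun_prop
  have : Measurable fun r : ((X × ℝ) × ℝ) × X => K r.1.1.1 r.2 (r.1.1.2 - r.1.2) * φ r.2 r.1.2 :=
    (hK.comp hKr).mul (hφ.comp hφr)
  exact this.stronglyMeasurable.integral_prod_right'.measurable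

lemma measurable_duhamel (hK : Measurable fun q : X × X × ℝ => K q.1 q.2.1 q.2.2)
    {φ : X → ℝ → ℝ} (hφ : Measurable (uncurry φ)) : Measurable (uncurry (duhamel μ K φ)) := by
  let S := {p : (X × ℝ) × ℝ | p.2 ∈ Ioc 0 p.1.2}
  have hS : MeasurableSet S :=
    (measurableSet_lt measurable_const measurable_snd).inter
      (measurableSet_le measurable_snd measurable_fst.snd)
  have hind : uncurry (duhamel μ K φ) =
      fun q => ∫ s, S.indicator (fun p => ∫ y, K p.1.1 y (p.1.2 - p.2) * φ y p.2 ∂μ) (q, s) := by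
    funext q
    rw [uncurry, duhamel, ← integral_indicator measurableSet_Ioc]
    rfl
  rw [hind]
  exact ((measurable_kernel_integral hK hφ).indicator hS).stronglyMeasurable
    |>.integral_prod_right'.measurable

lemma ae_kernel_integral_le (hK0 : ∀ x y t, 0 ≤ K x y t)
    (hK_exp : ∀ᵐ x ∂μ, ∀ᵐ τ ∂ν₊,
      Integrable (fun y => K x y τ) μ ∧ ∫ y, K x y τ ∂μ ≤ exp (-(τ * l)))
    (hφ0 : 0 ≤ φ) (hφC : ∀ᵐ q ∂μ.prod ν₊, φ q.1 q.2 ≤ C) (hC0 : 0 ≤ C) :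
    ∀ᵐ x ∂μ, ∀ t, ∀ᵐ s ∂volume.restrict (Ioc 0 t),
      ∫ y, K x y (t - s) * φ y s ∂μ ≤ C * exp (-((t - s) * l)) := by
  filter_upwards [hK_exp] with x hx t
  filter_upwards [ae_restrict_Ioc_sub_of_ae hx t, ae_restrict_Ioc_ae_of_ae_prod hφC t]
    with s hKs hφs
  calc ∫ y, K x y (t - s) * φ y s ∂μ ≤ ∫ y, K x y (t - s) * C ∂μ :=
        integral_mono_of_nonneg (ae_of_all _ fun y => mul_nonneg (hK0 _ _ _) (hφ0 y s))
          (hKs.1.mul_const C) (hφs.mono fun y hy => mul_le_mul_of_nonneg_left hy (hK0 _ _ _))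
    _ = C * ∫ y, K x y (t - s) ∂μ := by rw [integral_mul_const, mul_comm]
    _ ≤ C * exp (-((t - s) * l)) := mul_le_mul_of_nonneg_left hKs.2 hC0

lemma duhamel_le (hK0 : ∀ x y t, 0 ≤ K x y t)
    (hK_exp : ∀ᵐ x ∂μ, ∀ᵐ τ ∂ν₊,
      Integrable (fun y => K x y τ) μ ∧ ∫ y, K x y τ ∂μ ≤ exp (-(τ * l)))
    (hl : 0 < l) (hφ0 : 0 ≤ φ) (hφC : ∀ᵐ q ∂μ.prod ν₊, φ q.1 q.2 ≤ C) (hC0 : 0 ≤ C) :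
    ∀ᵐ x ∂μ, ∀ t, duhamel μ K φ x t ≤ C / l := by
  filter_upwards [ae_kernel_integral_le hK0 hK_exp hφ0 hφC hC0] with x hx t
  calc duhamel μ K φ x t ≤ ∫ s in Ioc 0 t, C * exp (-((t - s) * l)) :=
        integral_mono_of_nonneg
          (ae_of_all _ fun s => integral_nonneg fun y => mul_nonneg (hK0 _ _ _) (hφ0 y s))
          (by fun_prop : Continuous fun s => C * exp (-((t - s) * l))).integrableOn_Ioc (hx t)
    _ = C * ∫ s in Ioc 0 t, exp (-((t - s) * l)) := integral_const_mul C _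
    _ ≤ C * (1 / l) := mul_le_mul_of_nonneg_left (setIntegral_Ioc_exp_neg_sub_mul_le hl t) hC0
    _ = C / l := mul_one_div C l

lemma duhamel_mono (hK : Measurable fun q : X × X × ℝ => K q.1 q.2.1 q.2.2)
    (hK0 : ∀ x y t, 0 ≤ K x y t)
    (hK_exp : ∀ᵐ x ∂μ, ∀ᵐ τ ∂ν₊,
      Integrable (fun y => K x y τ) μ ∧ ∫ y, K x y τ ∂μ ≤ exp (-(τ * l)))
    (hφ0 : 0 ≤ φ) (hψ0 : 0 ≤ ψ) (hψ : Measurable (uncurry ψ))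
    (hφψ : ∀ᵐ q ∂μ.prod ν₊, φ q.1 q.2 ≤ ψ q.1 q.2) (hψC : ∀ᵐ q ∂μ.prod ν₊, ψ q.1 q.2 ≤ C)
    (hC0 : 0 ≤ C) :
    ∀ᵐ x ∂μ, ∀ t, duhamel μ K φ x t ≤ duhamel μ K ψ x t := by
  filter_upwards [hK_exp, ae_kernel_integral_le hK0 hK_exp hψ0 hψC hC0] with x hx hψx t
  refine integral_mono_of_nonneg
    (ae_of_all _ fun s => integral_nonneg fun y => mul_nonneg (hK0 _ _ _) (hφ0 y s)) ?_ ?_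
  · refine (by fun_prop : Continuous fun s => C * exp (-((t - s) * l))).integrableOn_Ioc.mono'
      ((measurable_kernel_integral (μ := μ) hK hψ).comp
        (measurable_prodMk_left (x := (x, t)))).aestronglyMeasurable ?_
    filter_upwards [hψx t] with s hs
    rwa [norm_of_nonneg (integral_nonneg fun y => mul_nonneg (hK0 _ _ _) (hψ0 y s))]
  · filter_upwards [ae_restrict_Ioc_sub_of_ae hx t,
      ae_restrict_Ioc_ae_of_ae_prod (hφψ.and hψC) t] with s hKs hs
    refine integral_mono_of_nonneg (ae_of_all _ fun y => mul_nonneg (hK0 _ _ _) (hφ0 y s))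
      (hKs.1.mul_bdd (c := C) (hψ.comp measurable_prodMk_right).aestronglyMeasurable ?_) ?_
    · filter_upwards [hs] with y hy
      rw [norm_of_nonneg (hψ0 y s)]
      exact hy.2
    · exact hs.mono fun y hy => mul_le_mul_of_nonneg_left hy.1 (hK0 _ _ _)

lemma tendsto_duhamel (hK : Measurable fun q : X × X × ℝ => K q.1 q.2.1 q.2.2)
    (hK0 : ∀ x y t, 0 ≤ K x y t)
    (hK_exp : ∀ᵐ x ∂μ, ∀ᵐ τ ∂ν₊,
      Integrable (fun y => K x y τ) μ ∧ ∫ y, K x y τ ∂μ ≤ exp (-(τ * l)))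
    {Φ : ℕ → X → ℝ → ℝ} (hΦ : ∀ m, Measurable (uncurry (Φ m))) (hΦ0 : ∀ m, 0 ≤ Φ m)
    (hΦC : ∀ m, ∀ᵐ q ∂μ.prod ν₊, Φ m q.1 q.2 ≤ C) (hC0 : 0 ≤ C)
    (hlim : ∀ᵐ q ∂μ.prod ν₊, Tendsto (fun m => Φ m q.1 q.2) atTop (𝓝 (φ q.1 q.2))) :
    ∀ᵐ x ∂μ, ∀ t, Tendsto (fun m => duhamel μ K (Φ m) x t) atTop (𝓝 (duhamel μ K φ x t)) := by
  have hbound := ae_all_iff.2 fun m => ae_kernel_integral_le hK0 hK_exp (hΦ0 m) (hΦC m) hC0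
  filter_upwards [hK_exp, hbound] with x hx hbx t
  refine tendsto_integral_of_dominated_convergence (fun s => C * exp (-((t - s) * l)))
    (fun m => ((measurable_kernel_integral (μ := μ) hK (hΦ m)).comp
      (measurable_prodMk_left (x := (x, t)))).aestronglyMeasurable)
    (by fun_prop : Continuous fun s => C * exp (-((t - s) * l))).integrableOn_Ioc
    (fun m => ?_) ?_
  · filter_upwards [hbx m t] with s hs
    rwa [norm_of_nonneg (integral_nonneg fun y => mul_nonneg (hK0 _ _ _) (hΦ0 m y s))]
  filter_upwards [ae_restrict_Ioc_sub_of_ae hx t,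
    ae_restrict_Ioc_ae_of_ae_prod ((ae_all_iff.2 hΦC).and hlim) t] with s hKs hs
  refine tendsto_integral_of_dominated_convergence (fun y => K x y (t - s) * C)
    (fun m => ((hK.comp (measurable_prodMk_left.comp measurable_prodMk_right)).mul
      ((hΦ m).comp measurable_prodMk_right)).aestronglyMeasurable)
    (hKs.1.mul_const C) (fun m => ?_) ?_
  · filter_upwards [hs] with y hy
    rw [norm_of_nonneg (mul_nonneg (hK0 _ _ _) (hΦ0 m y s))]
    exact mul_le_mul_of_nonneg_left (hy.1 m) (hK0 _ _ _)
  · filter_upwards [hs] with y hy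
    exact hy.2.const_mul _

end Duhamel

lemma ae_le_and_antitone_of_iterate {X : Type*} [MeasurableSpace X] {ρ : Measure (X × ℝ)}
    {A : (X → ℝ → ℝ) → Prop} {T : (X → ℝ → ℝ) → X → ℝ → ℝ} {U : ℕ → X → ℝ → ℝ}
    {g : X → ℝ → ℝ} {b η : ℝ} (hA : ∀ m, A (U m))
    (hT_le : ∀ v, A v → (∀ᵐ q ∂ρ, v q.1 q.2 ≤ η) → ∀ᵐ q ∂ρ, T v q.1 q.2 ≤ η - b)
    (hT_mono : ∀ v w, A v → A w → (∀ᵐ q ∂ρ, v q.1 q.2 ≤ w q.1 q.2) →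
      (∀ᵐ q ∂ρ, w q.1 q.2 ≤ η) → ∀ᵐ q ∂ρ, T v q.1 q.2 ≤ T w q.1 q.2)
    (hg : ∀ᵐ q ∂ρ, g q.1 q.2 ≤ b) (hU0 : ∀ x t, U 0 x t = η - b + g x t)
    (hU : ∀ m x t, U (m + 1) x t = g x t + T (U m) x t) :
    ∀ᵐ q ∂ρ, ∀ m, U m q.1 q.2 ≤ η ∧ U (m + 1) q.1 q.2 ≤ U m q.1 q.2 := by
  have key : ∀ m, (∀ᵐ q ∂ρ, U m q.1 q.2 ≤ η) ∧ ∀ᵐ q ∂ρ, U (m + 1) q.1 q.2 ≤ U m q.1 q.2 := by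
    intro m
    induction m with
    | zero =>
      have hU0η : ∀ᵐ q ∂ρ, U 0 q.1 q.2 ≤ η := hg.mono fun q hq => by rw [hU0]; linarith
      refine ⟨hU0η, ?_⟩
      filter_upwards [hT_le _ (hA 0) hU0η, hg] with q hTq hgq
      rw [hU, hU0]
      linarith
    | succ m ih =>
      have hU1η : ∀ᵐ q ∂ρ, U (m + 1) q.1 q.2 ≤ η := by
        filter_upwards [ih.1, ih.2] with q h1 h2 using h2.trans h1
      refine ⟨hU1η, ?_⟩
      filter_upwards [hT_mono _ _ (hA (m + 1)) (hA m) ih.2 ih.1] with q hq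
      rw [hU, hU m]
      linarith
  exact ae_all_iff.2 fun m => (key m).1.and (key m).2

lemma exists_ae_tendsto_of_antitone {X : Type*} [MeasurableSpace X] {ρ : Measure (X × ℝ)}
    {U : ℕ → X → ℝ → ℝ} {η : ℝ} (hU0 : ∀ m, 0 ≤ U m) (hU : ∀ m, Measurable (uncurry (U m)))
    (hanti : ∀ᵐ q ∂ρ, ∀ m, U m q.1 q.2 ≤ η ∧ U (m + 1) q.1 q.2 ≤ U m q.1 q.2) :
    ∃ u : X → ℝ → ℝ, 0 ≤ u ∧ Measurable (uncurry u) ∧ (∀ᵐ q ∂ρ, u q.1 q.2 ≤ η) ∧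
      ∀ᵐ q ∂ρ, Tendsto (fun m => U m q.1 q.2) atTop (𝓝 (u q.1 q.2)) := by
  have hbdd : ∀ x t, BddBelow (range fun m => U m x t) :=
    fun x t => ⟨0, forall_mem_range.2 fun m => hU0 m x t⟩
  refine ⟨fun x t => ⨅ m, U m x t, fun x t => le_ciInf fun m => hU0 m x t,
    Measurable.iInf fun m => hU m, ?_, ?_⟩
  · exact hanti.mono fun q hq => (ciInf_le (hbdd _ _) 0).trans (hq 0).1
  · exact hanti.mono fun q hq =>
      tendsto_atTop_ciInf (antitone_nat_of_succ_le fun m => (hq m).2) (hbdd _ _)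

structure SubstochasticSetting {X : Type*} [MeasurableSpace X] (μ : Measure X)
    (K : X → X → ℝ → ℝ) (h : X → ℝ → ℝ) (G : ℝ → ℝ) (l γ : ℝ) : Prop where
  measurable_K : Measurable fun q : X × X × ℝ => K q.1 q.2.1 q.2.2
  K_nonneg : ∀ x y t, 0 ≤ K x y t
  kernel_mass_le : ∀ᵐ x ∂μ, ∀ᵐ τ ∂ν₊,
    Integrable (fun y => K x y τ) μ ∧ ∫ y, K x y τ ∂μ ≤ exp (-(τ * l))
  rate_pos : 0 < l
  measurable_h : Measurable (uncurry h)
  h_nonneg : 0 ≤ h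
  ae_h_le : ∀ᵐ q ∂μ.prod ν₊, h q.1 q.2 ≤ γ
  γ_nonneg : 0 ≤ γ
  continuousOn_G : ContinuousOn G (Ici 0)
  G_nonneg : ∀ r, 0 ≤ r → 0 ≤ G r
  monotoneOn_G : MonotoneOn G (Ici 0)

namespace SubstochasticSetting

variable {X : Type*} [MeasurableSpace X] {μ : Measure X} {K : X → X → ℝ → ℝ}
  {h : X → ℝ → ℝ} {G : ℝ → ℝ} {l γ η : ℝ} {v w : X → ℝ → ℝ}

lemma source_nonneg (H : SubstochasticSetting μ K h G l γ) (hv0 : 0 ≤ v) :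
    0 ≤ fun y s => h y s * G (v y s) :=
  fun y s => mul_nonneg (H.h_nonneg y s) (H.G_nonneg _ (hv0 y s))

lemma measurable_source (H : SubstochasticSetting μ K h G l γ) (hv : Measurable (uncurry v))
    (hv0 : 0 ≤ v) : Measurable (uncurry fun y s => h y s * G (v y s)) :=
  H.measurable_h.mul (H.continuousOn_G.measurable_comp_of_nonneg hv fun q => hv0 q.1 q.2)

lemma ae_source_mono (H : SubstochasticSetting μ K h G l γ) {ρ : Measure (X × ℝ)}
    (hv0 : 0 ≤ v) (hw0 : 0 ≤ w) (hvw : ∀ᵐ q ∂ρ, v q.1 q.2 ≤ w q.1 q.2) :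
    ∀ᵐ q ∂ρ, h q.1 q.2 * G (v q.1 q.2) ≤ h q.1 q.2 * G (w q.1 q.2) :=
  hvw.mono fun q hq =>
    mul_le_mul_of_nonneg_left (H.monotoneOn_G (hv0 q.1 q.2) (hw0 q.1 q.2) hq) (H.h_nonneg q.1 q.2)

lemma ae_source_le (H : SubstochasticSetting μ K h G l γ) (hη : 0 ≤ η) (hv0 : 0 ≤ v)
    (hvη : ∀ᵐ q ∂μ.prod ν₊, v q.1 q.2 ≤ η) :
    ∀ᵐ q ∂μ.prod ν₊, h q.1 q.2 * G (v q.1 q.2) ≤ γ * G η := by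
  filter_upwards [H.ae_h_le, H.ae_source_mono (w := fun _ _ => η) hv0 (fun _ _ => hη) hvη]
    with q hhq hq
  exact hq.trans (mul_le_mul_of_nonneg_right hhq (H.G_nonneg η hη))

variable [SFinite μ]

lemma nonneg_measurable_iterate (H : SubstochasticSetting μ K h G l γ) {g : X → ℝ → ℝ}
    (hg : Measurable (uncurry g)) (hg0 : 0 ≤ g) {U : ℕ → X → ℝ → ℝ} (hU0 : 0 ≤ U 0)
    (hU0m : Measurable (uncurry (U 0)))
    (hU : ∀ m x t, U (m + 1) x t = g x t + duhamel μ K (fun y s => h y s * G (U m y s)) x t) :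
    ∀ m, 0 ≤ U m ∧ Measurable (uncurry (U m)) := by
  intro m
  induction m with
  | zero => exact ⟨hU0, hU0m⟩
  | succ m ih =>
    have hUm : U (m + 1) = fun x t => g x t + duhamel μ K (fun y s => h y s * G (U m y s)) x t :=
      funext fun x => funext (hU m x)
    rw [hUm]
    exact ⟨fun x t => add_nonneg (hg0 x t) (duhamel_nonneg H.K_nonneg (H.source_nonneg ih.1)),
      hg.add (measurable_duhamel H.measurable_K (H.measurable_source ih.2 ih.1))⟩

lemma ae_duhamel_source_le (H : SubstochasticSetting μ K h G l γ) (hη : 0 ≤ η) (hv0 : 0 ≤ v)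
    (hvη : ∀ᵐ q ∂μ.prod ν₊, v q.1 q.2 ≤ η) :
    ∀ᵐ q ∂μ.prod ν₊, duhamel μ K (fun y s => h y s * G (v y s)) q.1 q.2 ≤ γ * G η / l :=
  ae_prod_of_ae_forall <| duhamel_le H.K_nonneg H.kernel_mass_le H.rate_pos (H.source_nonneg hv0)
    (H.ae_source_le hη hv0 hvη) (mul_nonneg H.γ_nonneg (H.G_nonneg η hη))

lemma ae_duhamel_source_mono (H : SubstochasticSetting μ K h G l γ) (hη : 0 ≤ η)
    (hv0 : 0 ≤ v) (hw0 : 0 ≤ w) (hw : Measurable (uncurry w))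
    (hvw : ∀ᵐ q ∂μ.prod ν₊, v q.1 q.2 ≤ w q.1 q.2) (hwη : ∀ᵐ q ∂μ.prod ν₊, w q.1 q.2 ≤ η) :
    ∀ᵐ q ∂μ.prod ν₊, duhamel μ K (fun y s => h y s * G (v y s)) q.1 q.2 ≤
      duhamel μ K (fun y s => h y s * G (w y s)) q.1 q.2 :=
  ae_prod_of_ae_forall <| duhamel_mono H.measurable_K H.K_nonneg H.kernel_mass_le
    (H.source_nonneg hv0) (H.source_nonneg hw0) (H.measurable_source hw hw0)
    (H.ae_source_mono hv0 hw0 hvw) (H.ae_source_le hη hw0 hwη)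
    (mul_nonneg H.γ_nonneg (H.G_nonneg η hη))

lemma ae_tendsto_duhamel_source (H : SubstochasticSetting μ K h G l γ) (hη : 0 ≤ η)
    {V : ℕ → X → ℝ → ℝ} (hV0 : ∀ m, 0 ≤ V m) (hV : ∀ m, Measurable (uncurry (V m)))
    (hVη : ∀ m, ∀ᵐ q ∂μ.prod ν₊, V m q.1 q.2 ≤ η) (hv0 : 0 ≤ v)
    (hlim : ∀ᵐ q ∂μ.prod ν₊, Tendsto (fun m => V m q.1 q.2) atTop (𝓝 (v q.1 q.2))) :
    ∀ᵐ q ∂μ.prod ν₊, Tendsto (fun m => duhamel μ K (fun y s => h y s * G (V m y s)) q.1 q.2)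
      atTop (𝓝 (duhamel μ K (fun y s => h y s * G (v y s)) q.1 q.2)) := by
  refine ae_prod_of_ae_forall <| tendsto_duhamel H.measurable_K H.K_nonneg H.kernel_mass_le
    (fun m => H.measurable_source (hV m) (hV0 m)) (fun m => H.source_nonneg (hV0 m))
    (fun m => H.ae_source_le hη (hV0 m) (hVη m)) (mul_nonneg H.γ_nonneg (H.G_nonneg η hη)) ?_
  filter_upwards [hlim] with q hq
  have hGV := (H.continuousOn_G _ (hv0 q.1 q.2)).tendsto.comp
    (tendsto_nhdsWithin_iff.2 ⟨hq, Eventually.of_forall fun m => hV0 m q.1 q.2⟩)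
  exact hGV.const_mul _

end SubstochasticSetting

theorem existence_substochastic_general
    {X : Type*} [MeasurableSpace X] (μ : Measure X) [SigmaFinite μ]
    (K : X → X → ℝ → ℝ) (g h : X → ℝ → ℝ) (G : ℝ → ℝ)
    (lamm lamp β γ η : ℝ)
    (hlam : 0 < lamm)
    (hK_meas : Measurable fun q : X × X × ℝ => K q.1 q.2.1 q.2.2)
    (hK_nonneg : ∀ x y t, 0 ≤ K x y t)
    (hK_sub : ∀ᵐ x ∂μ, ∀ᵐ t ∂(volume.restrict (Ioi (0:ℝ))),
      Real.exp (-(t * lamp)) ≤ (∫ y, K x y t ∂μ) ∧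
      (∫ y, K x y t ∂μ) ≤ Real.exp (-(t * lamm)))
    (hg_meas : Measurable fun q : X × ℝ => g q.1 q.2)
    (hg_nonneg : ∀ x t, 0 ≤ g x t)
    (hg_bdd : MemLp (fun q : X × ℝ => g q.1 q.2) ⊤
      (μ.prod (volume.restrict (Ioi (0:ℝ)))))
    (hβ : β = (eLpNorm (fun q : X × ℝ => g q.1 q.2) ⊤
      (μ.prod (volume.restrict (Ioi (0:ℝ))))).toReal)
    (hh_meas : Measurable fun q : X × ℝ => h q.1 q.2)
    (hh_nonneg : ∀ x t, 0 ≤ h x t)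
    (hh_bdd : MemLp (fun q : X × ℝ => h q.1 q.2) ⊤
      (μ.prod (volume.restrict (Ioi (0:ℝ)))))
    (hγ : γ = (eLpNorm (fun q : X × ℝ => h q.1 q.2) ⊤
      (μ.prod (volume.restrict (Ioi (0:ℝ))))).toReal)
    (hG_cont : ContinuousOn G (Ici 0))
    (hG_nonneg : ∀ u, 0 ≤ u → 0 ≤ G u)
    (hG_mono : StrictMonoOn G (Ici 0))
    (hη_pos : 0 < η) (hη_eq : γ * G η = (η - β) * lamm)
    (U : ℕ → X → ℝ → ℝ)
    (hU0 : ∀ x t, U 0 x t = η - β + g x t)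
    (hUsucc : ∀ m x t, U (m + 1) x t =
      g x t + ∫ s in Ioc (0:ℝ) t, ∫ y, K x y (t - s) * (h y s * G (U m y s)) ∂μ) :
    ∃ u : X → ℝ → ℝ,
      MemLp (fun q : X × ℝ => u q.1 q.2) ⊤ (μ.prod (volume.restrict (Ioi (0:ℝ)))) ∧
      (∀ᵐ q ∂(μ.prod (volume.restrict (Ioi (0:ℝ)))), 0 ≤ u q.1 q.2) ∧
      (∀ᵐ q ∂(μ.prod (volume.restrict (Ioi (0:ℝ)))),
        u q.1 q.2 = g q.1 q.2 +
          ∫ s in Ioc (0:ℝ) q.2, ∫ y, K q.1 y (q.2 - s) * (h y s * G (u y s)) ∂μ) ∧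
      (∀ m, Measurable fun q : X × ℝ => U m q.1 q.2) ∧
      (∀ᵐ q ∂(μ.prod (volume.restrict (Ioi (0:ℝ)))),
        ∀ m, 0 ≤ U m q.1 q.2 ∧ U (m + 1) q.1 q.2 ≤ U m q.1 q.2) ∧
      (∀ᵐ q ∂(μ.prod (volume.restrict (Ioi (0:ℝ)))),
        Tendsto (fun m => U m q.1 q.2) atTop (nhds (u q.1 q.2))) := by
  have H : SubstochasticSetting μ K h G lamm γ :=
    { measurable_K := hK_meas
      K_nonneg := hK_nonneg
      -- a non-integrable slice would have Bochner integral `0 < e^{-τλ₊}`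
      kernel_mass_le := by
        filter_upwards [hK_sub] with x hx
        filter_upwards [hx] with τ hτ
        exact ⟨Integrable.of_integral_ne_zero ((exp_pos _).trans_le hτ.1).ne', hτ.2⟩
      rate_pos := hlam
      measurable_h := hh_meas
      h_nonneg := hh_nonneg
      ae_h_le := hγ ▸ ae_le_toReal_eLpNorm_top hh_bdd
      γ_nonneg := hγ ▸ ENNReal.toReal_nonneg
      continuousOn_G := hG_cont
      G_nonneg := hG_nonneg
      monotoneOn_G := hG_mono.monotoneOn }
  have hη_sub : γ * G η / lamm = η - β := by rw [hη_eq, mul_div_cancel_right₀ _ hlam.ne']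
  have hβη : 0 ≤ η - β :=
    hη_sub ▸ div_nonneg (mul_nonneg H.γ_nonneg (hG_nonneg η hη_pos.le)) hlam.le
  have hU := H.nonneg_measurable_iterate hg_meas hg_nonneg
    (fun x t => (hU0 x t).symm ▸ add_nonneg hβη (hg_nonneg x t))
    ((funext fun q => (hU0 q.1 q.2).symm : _ = uncurry (U 0)) ▸ measurable_const.add hg_meas)
    hUsucc
  have hanti := ae_le_and_antitone_of_iterate (A := fun v => 0 ≤ v ∧ Measurable (uncurry v)) hU
    (fun v hv hvη => hη_sub ▸ H.ae_duhamel_source_le hη_pos.le hv.1 hvη)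
    (fun v w hv hw hvw hwη => H.ae_duhamel_source_mono hη_pos.le hv.1 hw.1 hw.2 hvw hwη)
    (hβ ▸ ae_le_toReal_eLpNorm_top hg_bdd) hU0 hUsucc
  obtain ⟨u, hu0, hu_meas, hu_le, hlim⟩ :=
    exists_ae_tendsto_of_antitone (fun m => (hU m).1) (fun m => (hU m).2) hanti
  have heq : ∀ᵐ q ∂μ.prod ν₊,
      u q.1 q.2 = g q.1 q.2 + duhamel μ K (fun y s => h y s * G (u y s)) q.1 q.2 := by
    filter_upwards [hlim, H.ae_tendsto_duhamel_source hη_pos.le (fun m => (hU m).1)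
      (fun m => (hU m).2) (fun m => hanti.mono fun q hq => (hq m).1) hu0 hlim] with q hq hTq
    refine tendsto_nhds_unique (hq.comp (tendsto_add_atTop_nat 1)) ?_
    simp only [comp_def, hUsucc]
    exact hTq.const_add _
  refine ⟨u, memLp_top_of_bound hu_meas.aestronglyMeasurable η ?_, ae_of_all _ fun q => hu0 q.1 q.2,
    heq, fun m => (hU m).2, hanti.mono fun q hq m => ⟨(hU m).1 q.1 q.2, (hq m).2⟩, hlim⟩
  filter_upwards [hu_le] with q hq
  rwa [norm_of_nonneg (hu0 q.1 q.2)]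

/-- **Existence, substochastic case (Theorem 3.2, first part).**
Under the substochastic kernel bounds `e^{-tλ₊} ≤ ∫ K ≤ e^{-tλ₋}` with
`λ₊ ≥ λ₋ > 0`, bounded `h` with `γ = ‖h‖_∞`, and the threshold `η` with
`γ G(η) = (η - β) λ₋`, there exists a non-negative `u ∈ L^∞` solving the
integral equation, obtained as the a.e. limit of the nonincreasing
iteration `U`. -/
theorem existence_substochastic
    {X : Type*} [MeasurableSpace X] (μ : Measure X) [SigmaFinite μ]
    (K : X → X → ℝ → ℝ) (g h : X → ℝ → ℝ) (G : ℝ → ℝ)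
    (lamm lamp β γ η : ℝ)
    (hlam : 0 < lamm) (hlam_le : lamm ≤ lamp)
    (hK_meas : Measurable fun q : X × X × ℝ => K q.1 q.2.1 q.2.2)
    (hK_nonneg : ∀ x y t, 0 ≤ K x y t)
    (hK_sub : ∀ᵐ x ∂μ, ∀ᵐ t ∂(volume.restrict (Ioi (0:ℝ))),
      Real.exp (-(t * lamp)) ≤ (∫ y, K x y t ∂μ) ∧
      (∫ y, K x y t ∂μ) ≤ Real.exp (-(t * lamm)))
    (hg_meas : Measurable fun q : X × ℝ => g q.1 q.2)
    (hg_nonneg : ∀ x t, 0 ≤ g x t)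
    (hg_bdd : MemLp (fun q : X × ℝ => g q.1 q.2) ⊤
      (μ.prod (volume.restrict (Ioi (0:ℝ)))))
    (hβ : β = (eLpNorm (fun q : X × ℝ => g q.1 q.2) ⊤
      (μ.prod (volume.restrict (Ioi (0:ℝ))))).toReal)
    (hh_meas : Measurable fun q : X × ℝ => h q.1 q.2)
    (hh_nonneg : ∀ x t, 0 ≤ h x t)
    (hh_bdd : MemLp (fun q : X × ℝ => h q.1 q.2) ⊤
      (μ.prod (volume.restrict (Ioi (0:ℝ)))))
    (hγ : γ = (eLpNorm (fun q : X × ℝ => h q.1 q.2) ⊤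
      (μ.prod (volume.restrict (Ioi (0:ℝ))))).toReal)
    (hG_cont : ContinuousOn G (Ici 0))
    (hG_zero : G 0 = 0)
    (hG_nonneg : ∀ u, 0 ≤ u → 0 ≤ G u)
    (hG_mono : StrictMonoOn G (Ici 0))
    (hG_conc : ConcaveOn ℝ (Ici 0) G)
    (hη_pos : 0 < η) (hη_eq : γ * G η = (η - β) * lamm)
    (U : ℕ → X → ℝ → ℝ)
    (hU0 : ∀ x t, U 0 x t = η - β + g x t)
    (hUsucc : ∀ m x t, U (m + 1) x t =
      g x t + ∫ s in Ioc (0:ℝ) t, ∫ y, K x y (t - s) * (h y s * G (U m y s)) ∂μ) :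
    ∃ u : X → ℝ → ℝ,
      MemLp (fun q : X × ℝ => u q.1 q.2) ⊤ (μ.prod (volume.restrict (Ioi (0:ℝ)))) ∧
      (∀ᵐ q ∂(μ.prod (volume.restrict (Ioi (0:ℝ)))), 0 ≤ u q.1 q.2) ∧
      (∀ᵐ q ∂(μ.prod (volume.restrict (Ioi (0:ℝ)))),
        u q.1 q.2 = g q.1 q.2 +
          ∫ s in Ioc (0:ℝ) q.2, ∫ y, K q.1 y (q.2 - s) * (h y s * G (u y s)) ∂μ) ∧
      (∀ m, Measurable fun q : X × ℝ => U m q.1 q.2) ∧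
      (∀ᵐ q ∂(μ.prod (volume.restrict (Ioi (0:ℝ)))),
        ∀ m, 0 ≤ U m q.1 q.2 ∧ U (m + 1) q.1 q.2 ≤ U m q.1 q.2) ∧
      (∀ᵐ q ∂(μ.prod (volume.restrict (Ioi (0:ℝ)))),
        Tendsto (fun m => U m q.1 q.2) atTop (nhds (u q.1 q.2))) :=
  existence_substochastic_general μ K g h G lamm lamp β γ η hlam hK_meas hK_nonneg hK_sub hg_meas
    hg_nonneg hg_bdd hβ hh_meas hh_nonneg hh_bdd hγ hG_cont hG_nonneg hG_mono hη_pos hη_eq U hU0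
    hUsucc
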